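/- arXiv:2008.07869 — 7 statements merged into one kernel-verified Lean document; each statement's English description precedes it below -/
import Mathlib

section
/- The function C^M_{φ,ψ}(u,v) = uv·min{φ(u)/u, ψ(v)/v} for uv > 0 and 0 otherwise is a bivariate copula, i.e., it satisfies C(u,0)=C(0,v)=0, C(u,1)=u, C(1,v)=v, and is 2-increasing. -/
/-!
For `u, v > 0` the copula is `min (v φ(u)) (u ψ(v))`, and it is symmetric under exchanging
`(φ, u)` with `(ψ, v)`. At a corner `(u₂, v₂)` where the `ψ`-term is the minimum, it stays the
minimum along the whole edge `u ≤ u₂` because `φ(u)/u` decreases, so the upper edge contributes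
`(u₂ - u₁) ψ(v₂)` to the volume; the lower edge contributes at most `(u₂ - u₁) ψ(v₁)`, and `ψ`
increases. The other corner case is the same argument after the exchange.
-/

open Set

/-- The Marshall copula `C^M_{φ,ψ}`. -/
noncomputable def marshallC (φ ψ : ℝ → ℝ) (u v : ℝ) : ℝ :=
  if 0 < u * v then u * v * min (φ u / u) (ψ v / v) else 0

variable {φ ψ : ℝ → ℝ} {u v u₁ u₂ v₁ v₂ : ℝ}

lemma marshallC_swap (φ ψ : ℝ → ℝ) (u v : ℝ) : marshallC φ ψ u v = marshallC ψ φ v u := by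
  simp only [marshallC, mul_comm u v, min_comm]

@[simp] lemma marshallC_zero_left : marshallC φ ψ 0 v = 0 := by simp [marshallC]

@[simp] lemma marshallC_zero_right : marshallC φ ψ u 0 = 0 := by simp [marshallC]

lemma marshallC_of_pos (hu : 0 < u) (hv : 0 < v) :
    marshallC φ ψ u v = u * v * min (φ u / u) (ψ v / v) :=
  if_pos (mul_pos hu hv)

lemma marshallC_eq_min (hφ0 : φ 0 = 0) (hψ0 : ψ 0 = 0) (hu : 0 ≤ u) (hv : 0 ≤ v) :
    marshallC φ ψ u v = min (v * φ u) (u * ψ v) := by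
  rcases hu.eq_or_lt with rfl | hu
  · simp [hφ0]
  rcases hv.eq_or_lt with rfl | hv
  · simp [hψ0]
  rw [marshallC_of_pos hu hv, mul_min_of_nonneg _ _ (mul_pos hu hv).le]
  congr 1 <;> field_simp

lemma marshallC_of_div_le (hu : 0 < u) (hv : 0 < v) (h : ψ v / v ≤ φ u / u) :
    marshallC φ ψ u v = u * ψ v := by
  rw [marshallC_of_pos hu hv, min_eq_right h]
  field_simp

lemma marshallC_monotoneOn_right (hφ0 : φ 0 = 0) (hψ0 : ψ 0 = 0)
    (hψmono : MonotoneOn ψ (Icc 0 1)) (hu : 0 ≤ u) (hφu : 0 ≤ φ u) :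
    MonotoneOn (marshallC φ ψ u) (Icc 0 1) := by
  intro v₁ hv₁ v₂ hv₂ hv
  rw [marshallC_eq_min hφ0 hψ0 hu hv₁.1, marshallC_eq_min hφ0 hψ0 hu hv₂.1]
  exact min_le_min (mul_le_mul_of_nonneg_right hv hφu)
    (mul_le_mul_of_nonneg_left (hψmono hv₁ hv₂ hv) hu)

lemma marshallC_sub_le (hu₁ : 0 < u₁) (hu : u₁ ≤ u₂) (hv : 0 < v)
    (hφdiv : φ u₂ / u₂ ≤ φ u₁ / u₁) :
    marshallC φ ψ u₂ v - marshallC φ ψ u₁ v ≤ (u₂ - u₁) * ψ v := by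
  rw [marshallC_of_pos (hu₁.trans_le hu) hv, marshallC_of_pos hu₁ hv]
  have hm : min (φ u₂ / u₂) (ψ v / v) ≤ min (φ u₁ / u₁) (ψ v / v) :=
    min_le_min_right _ hφdiv
  have hmψ : min (φ u₂ / u₂) (ψ v / v) ≤ ψ v / v := min_le_right _ _
  calc u₂ * v * min (φ u₂ / u₂) (ψ v / v) - u₁ * v * min (φ u₁ / u₁) (ψ v / v)
      ≤ (u₂ - u₁) * v * min (φ u₂ / u₂) (ψ v / v) := by
        nlinarith [mul_le_mul_of_nonneg_left hm (mul_pos hu₁ hv).le]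
    _ ≤ (u₂ - u₁) * v * (ψ v / v) := by gcongr
    _ = (u₂ - u₁) * ψ v := by field_simp

lemma marshallC_volume_nonneg_of_div_le (hu₁ : 0 < u₁) (hu : u₁ ≤ u₂) (hv₁ : 0 < v₁)
    (hv : v₁ ≤ v₂) (hφdiv : φ u₂ / u₂ ≤ φ u₁ / u₁) (hψv : ψ v₁ ≤ ψ v₂)
    (hcorner : ψ v₂ / v₂ ≤ φ u₂ / u₂) :
    0 ≤ marshallC φ ψ u₂ v₂ - marshallC φ ψ u₁ v₂
      - marshallC φ ψ u₂ v₁ + marshallC φ ψ u₁ v₁ := by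
  have hv₂ : 0 < v₂ := hv₁.trans_le hv
  rw [marshallC_of_div_le (hu₁.trans_le hu) hv₂ hcorner,
    marshallC_of_div_le hu₁ hv₂ (hcorner.trans hφdiv)]
  have hlower := marshallC_sub_le (ψ := ψ) hu₁ hu hv₁ hφdiv
  nlinarith [mul_le_mul_of_nonneg_left hψv (sub_nonneg.2 hu)]

lemma marshallC_volume_nonneg
    (hφmono : MonotoneOn φ (Icc 0 1)) (hψmono : MonotoneOn ψ (Icc 0 1))
    (hφnonneg : ∀ u ∈ Icc (0:ℝ) 1, 0 ≤ φ u) (hψnonneg : ∀ v ∈ Icc (0:ℝ) 1, 0 ≤ ψ v)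
    (hφ0 : φ 0 = 0) (hψ0 : ψ 0 = 0)
    (hφstar : AntitoneOn (fun u => φ u / u) (Ioc 0 1))
    (hψstar : AntitoneOn (fun v => ψ v / v) (Ioc 0 1))
    (hu₁ : u₁ ∈ Icc (0:ℝ) 1) (hu₂ : u₂ ∈ Icc (0:ℝ) 1)
    (hv₁ : v₁ ∈ Icc (0:ℝ) 1) (hv₂ : v₂ ∈ Icc (0:ℝ) 1) (hu : u₁ ≤ u₂) (hv : v₁ ≤ v₂) :
    0 ≤ marshallC φ ψ u₂ v₂ - marshallC φ ψ u₁ v₂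
      - marshallC φ ψ u₂ v₁ + marshallC φ ψ u₁ v₁ := by
  rcases hu₁.1.eq_or_lt with rfl | hu₁pos
  · have := marshallC_monotoneOn_right hφ0 hψ0 hψmono hu₂.1 (hφnonneg u₂ hu₂) hv₁ hv₂ hv
    simp only [marshallC_zero_left]
    linarith
  rcases hv₁.1.eq_or_lt with rfl | hv₁pos
  · have := marshallC_monotoneOn_right hψ0 hφ0 hφmono hv₂.1 (hψnonneg v₂ hv₂) hu₁ hu₂ hu
    simp only [marshallC_zero_right, marshallC_swap φ ψ _ v₂] at this ⊢
    linarith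
  have hu₂pos := hu₁pos.trans_le hu
  have hv₂pos := hv₁pos.trans_le hv
  have hφdiv := hφstar ⟨hu₁pos, hu₁.2⟩ ⟨hu₂pos, hu₂.2⟩ hu
  have hψdiv := hψstar ⟨hv₁pos, hv₁.2⟩ ⟨hv₂pos, hv₂.2⟩ hv
  rcases le_total (ψ v₂ / v₂) (φ u₂ / u₂) with hcorner | hcorner
  · exact marshallC_volume_nonneg_of_div_le hu₁pos hu hv₁pos hv hφdiv
      (hψmono hv₁ hv₂ hv) hcorner
  · have := marshallC_volume_nonneg_of_div_le hv₁pos hv hu₁pos hu hψdiv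
      (hφmono hu₁ hu₂ hu) hcorner
    simp only [marshallC_swap ψ φ] at this
    linarith

lemma marshallC_one_right (hφ1 : φ 1 = 1) (hψ1 : ψ 1 = 1)
    (hφstar : AntitoneOn (fun u => φ u / u) (Ioc 0 1)) (hu : u ∈ Icc (0:ℝ) 1) :
    marshallC φ ψ u 1 = u := by
  rcases hu.1.eq_or_lt with rfl | hupos
  · exact marshallC_zero_left
  have h : ψ 1 / 1 ≤ φ u / u := by
    simpa [hφ1, hψ1] using hφstar ⟨hupos, hu.2⟩ ⟨one_pos, le_rfl⟩ hu.2
  rw [marshallC_of_div_le hupos one_pos h, hψ1, mul_one]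

theorem marshallC_isCopula (φ ψ : ℝ → ℝ)
    (hφmono : MonotoneOn φ (Icc 0 1)) (hψmono : MonotoneOn ψ (Icc 0 1))
    (hφmap : ∀ u ∈ Icc (0:ℝ) 1, φ u ∈ Icc (0:ℝ) 1)
    (hψmap : ∀ v ∈ Icc (0:ℝ) 1, ψ v ∈ Icc (0:ℝ) 1)
    (hφ0 : φ 0 = 0) (hψ0 : ψ 0 = 0) (hφ1 : φ 1 = 1) (hψ1 : ψ 1 = 1)
    (hφstar : AntitoneOn (fun u => φ u / u) (Ioc 0 1))
    (hψstar : AntitoneOn (fun v => ψ v / v) (Ioc 0 1)) :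
    (∀ u ∈ Icc (0:ℝ) 1, marshallC φ ψ u 0 = 0) ∧
    (∀ v ∈ Icc (0:ℝ) 1, marshallC φ ψ 0 v = 0) ∧
    (∀ u ∈ Icc (0:ℝ) 1, marshallC φ ψ u 1 = u) ∧
    (∀ v ∈ Icc (0:ℝ) 1, marshallC φ ψ 1 v = v) ∧
    (∀ u₁ u₂ v₁ v₂ : ℝ, u₁ ∈ Icc (0:ℝ) 1 → u₂ ∈ Icc (0:ℝ) 1 →
      v₁ ∈ Icc (0:ℝ) 1 → v₂ ∈ Icc (0:ℝ) 1 → u₁ ≤ u₂ → v₁ ≤ v₂ →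
      0 ≤ marshallC φ ψ u₂ v₂ - marshallC φ ψ u₁ v₂
          - marshallC φ ψ u₂ v₁ + marshallC φ ψ u₁ v₁) :=
  ⟨fun _ _ => marshallC_zero_right,
   fun _ _ => marshallC_zero_left,
   fun _ hu => marshallC_one_right hφ1 hψ1 hφstar hu,
   fun v hv => (marshallC_swap φ ψ 1 v).trans (marshallC_one_right hψ1 hφ1 hψstar hv),
   fun _ _ _ _ hu₁ hu₂ hv₁ hv₂ hu hv =>
     marshallC_volume_nonneg hφmono hψmono (fun u hu => (hφmap u hu).1)
       (fun v hv => (hψmap v hv).1) hφ0 hψ0 hφstar hψstar hu₁ hu₂ hv₁ hv₂ hu hv⟩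
end

section
/- Maxmin copulas are monotone increasing in φ and monotone decreasing in χ: if φ ≤ φ' and χ' ≤ χ pointwise, then C^MM_{φ,χ}(u,v) ≤ C^MM_{φ',χ'}(u,v) for all u,v ∈ [0,1]. -/
open Set

/-- The maxmin copula `C^MM_{φ,χ}`. -/
noncomputable def maxminC (φ χ : ℝ → ℝ) (u v : ℝ) : ℝ :=
  u * v + min (u * (1 - v)) ((φ u - u) * (v - χ v))

theorem maxminC_le_maxminC {φ φ' χ χ' : ℝ → ℝ} {u v : ℝ} (hφ : u ≤ φ u) (hχ : χ v ≤ v)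
    (hφφ' : φ u ≤ φ' u) (hχ'χ : χ' v ≤ χ v) : maxminC φ χ u v ≤ maxminC φ' χ' u v := by
  have hprod : (φ u - u) * (v - χ v) ≤ (φ' u - u) * (v - χ' v) :=
    mul_le_mul (by linarith) (by linarith) (by linarith) (by linarith)
  unfold maxminC
  gcongr

theorem maxminC_mono_in_generators_general (φ φ' χ χ' : ℝ → ℝ)
    (hφge : ∀ u ∈ Icc (0:ℝ) 1, u ≤ φ u)
    (hχle : ∀ v ∈ Icc (0:ℝ) 1, χ v ≤ v)
    (hφle : ∀ u ∈ Icc (0:ℝ) 1, φ u ≤ φ' u)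
    (hχ'leχ : ∀ v ∈ Icc (0:ℝ) 1, χ' v ≤ χ v) :
    ∀ u ∈ Icc (0:ℝ) 1, ∀ v ∈ Icc (0:ℝ) 1,
      maxminC φ χ u v ≤ maxminC φ' χ' u v :=
  fun u hu v hv => maxminC_le_maxminC (hφge u hu) (hχle v hv) (hφle u hu) (hχ'leχ v hv)

theorem maxminC_mono_in_generators (φ φ' χ χ' : ℝ → ℝ)
    (hφmono : MonotoneOn φ (Icc 0 1)) (hφ'mono : MonotoneOn φ' (Icc 0 1))
    (hχmono : MonotoneOn χ (Icc 0 1)) (hχ'mono : MonotoneOn χ' (Icc 0 1))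
    (hφ0 : φ 0 = 0) (hφ'0 : φ' 0 = 0) (hχ0 : χ 0 = 0) (hχ'0 : χ' 0 = 0)
    (hφ1 : φ 1 = 1) (hφ'1 : φ' 1 = 1) (hχ1 : χ 1 = 1) (hχ'1 : χ' 1 = 1)
    (hφge : ∀ u ∈ Icc (0:ℝ) 1, u ≤ φ u) (hφ'ge : ∀ u ∈ Icc (0:ℝ) 1, u ≤ φ' u)
    (hχle : ∀ v ∈ Icc (0:ℝ) 1, χ v ≤ v) (hχ'le : ∀ v ∈ Icc (0:ℝ) 1, χ' v ≤ v)
    (hφmap : ∀ u ∈ Icc (0:ℝ) 1, φ u ∈ Icc (0:ℝ) 1)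
    (hφ'map : ∀ u ∈ Icc (0:ℝ) 1, φ' u ∈ Icc (0:ℝ) 1)
    (hχmap : ∀ v ∈ Icc (0:ℝ) 1, χ v ∈ Icc (0:ℝ) 1)
    (hχ'map : ∀ v ∈ Icc (0:ℝ) 1, χ' v ∈ Icc (0:ℝ) 1)
    (hφle : ∀ u ∈ Icc (0:ℝ) 1, φ u ≤ φ' u)
    (hχ'leχ : ∀ v ∈ Icc (0:ℝ) 1, χ' v ≤ χ v) :
    ∀ u ∈ Icc (0:ℝ) 1, ∀ v ∈ Icc (0:ℝ) 1,
      maxminC φ χ u v ≤ maxminC φ' χ' u v :=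
  maxminC_mono_in_generators_general φ φ' χ χ' hφge hχle hφle hχ'leχ
end

section
/- The function C^RMM_{f,g}(x,y) = max{0, xy − f(x)g(y)} is a bivariate copula (satisfies boundary conditions and 2-increasingness) whenever f and g satisfy the RMM generator conditions (G1)–(G3). -/
/-!
Write `H(x, y) = x y - f(x) g(y)`, so that `C = max 0 H`. By (G3), `H` is nondecreasing in each
variable at points where it is positive; this settles every rectangle on which `H(u₁, v₂) ≤ 0` or
`H(u₂, v₁) ≤ 0`. Otherwise the `H`-volume of the rectangle is `Δu Δv - Δf Δg`, and the product
`Δf Δg` is bounded by (G2) when both increments are negative and by (G3), in the form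
`Δf · u₁ ≤ f(u₁) Δu`, when both are positive. This gives `Δf Δg ≤ Δu Δv` if `H(u₁, v₁) ≥ 0`, and
the superadditivity `H(u₁, v₂) + H(u₂, v₁) ≤ H(u₂, v₂)` if `H(u₁, v₁) ≤ 0` and `Δu Δv < u₁ v₁`;
for `Δu Δv ≥ u₁ v₁` superadditivity follows directly from (G3).
-/

open Set

/-- The reflected maxmin (RMM) copula `C^RMM_{f,g}`. -/
noncomputable def rmmC (f g : ℝ → ℝ) (x y : ℝ) : ℝ :=
  max 0 (x * y - f x * g y)

/-- Conditions (G1)–(G3) on an RMM generator. -/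
structure IsRMMGenerator (f : ℝ → ℝ) : Prop where
  map_mem : ∀ u ∈ Icc (0:ℝ) 1, f u ∈ Icc (0:ℝ) 1
  zero : f 0 = 0
  one : f 1 = 0
  hat_mono : MonotoneOn (fun u => f u + u) (Icc 0 1)
  star_anti : AntitoneOn (fun u => f u / u) (Ioc 0 1)

theorem max_zero_rect_nonneg {h₁₁ h₁₂ h₂₁ h₂₂ : ℝ}
    (h₁₂_le : 0 < h₁₂ → h₁₂ ≤ h₂₂) (h₂₁_le : 0 < h₂₁ → h₂₁ ≤ h₂₂)
    (h₁₁_le_h₁₂ : 0 < h₁₁ → h₁₁ ≤ h₁₂) (h₁₁_le_h₂₁ : 0 < h₁₁ → h₁₁ ≤ h₂₁)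
    (hadd : 0 < h₁₂ → 0 < h₂₁ → h₁₂ + h₂₁ ≤ h₂₂ + max 0 h₁₁) :
    0 ≤ max 0 h₂₂ - max 0 h₁₂ - max 0 h₂₁ + max 0 h₁₁ := by
  have h₂₂_le := le_max_right 0 h₂₂
  rcases le_or_gt h₁₂ 0 with n₁₂ | p₁₂ <;> rcases le_or_gt h₂₁ 0 with n₂₁ | p₂₁
  · rw [max_eq_left n₁₂, max_eq_left n₂₁]
    linarith [le_max_left 0 h₂₂, le_max_left 0 h₁₁]
  · have n₁₁ : h₁₁ ≤ 0 := not_lt.1 fun p₁₁ => (h₁₁_le_h₁₂ p₁₁).not_gt (p₁₁.trans_le' n₁₂)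
    rw [max_eq_left n₁₂, max_eq_right p₂₁.le, max_eq_left n₁₁]
    linarith [h₂₁_le p₂₁]
  · have n₁₁ : h₁₁ ≤ 0 := not_lt.1 fun p₁₁ => (h₁₁_le_h₂₁ p₁₁).not_gt (p₁₁.trans_le' n₂₁)
    rw [max_eq_right p₁₂.le, max_eq_left n₂₁, max_eq_left n₁₁]
    linarith [h₁₂_le p₁₂]
  · rw [max_eq_right p₁₂.le, max_eq_right p₂₁.le]
    linarith [hadd p₁₂ p₂₁]

namespace IsRMMGenerator

variable {f g : ℝ → ℝ} {a b c d : ℝ}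

theorem nonneg (hf : IsRMMGenerator f) {u : ℝ} (hu : u ∈ Icc (0:ℝ) 1) : 0 ≤ f u :=
  (hf.map_mem u hu).1

theorem apply_add_le_apply_add (hf : IsRMMGenerator f) (ha : 0 ≤ a) (hab : a ≤ b) (hb : b ≤ 1) :
    f a + a ≤ f b + b :=
  hf.hat_mono ⟨ha, hab.trans hb⟩ ⟨ha.trans hab, hb⟩ hab

theorem apply_mul_le_apply_mul (hf : IsRMMGenerator f) (ha : 0 < a) (hab : a ≤ b) (hb : b ≤ 1) :
    f b * a ≤ f a * b := by
  have h : f b / b ≤ f a / a := hf.star_anti ⟨ha, hab.trans hb⟩ ⟨ha.trans_le hab, hb⟩ hab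
  rwa [div_le_div_iff₀ (ha.trans_le hab) ha] at h

theorem increment_mul_le (hf : IsRMMGenerator f) (hg : IsRMMGenerator g)
    (ha : 0 < a) (hab : a ≤ b) (hb : b ≤ 1) (hc : 0 < c) (hcd : c ≤ d) (hd : d ≤ 1) :
    (f b - f a) * (g d - g c) * (a * c) ≤ max (a * c) (f a * g c) * ((b - a) * (d - c)) := by
  have hΔ : 0 ≤ (b - a) * (d - c) := mul_nonneg (sub_nonneg.2 hab) (sub_nonneg.2 hcd)
  have hac : 0 ≤ a * c := (mul_pos ha hc).le
  rcases le_or_gt (f b) (f a) with hfab | hfab <;> rcases le_or_gt (g d) (g c) with hgcd | hgcd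
  · have hf' := hf.apply_add_le_apply_add ha.le hab hb
    have hg' := hg.apply_add_le_apply_add hc.le hcd hd
    calc (f b - f a) * (g d - g c) * (a * c) = (f a - f b) * (g c - g d) * (a * c) := by ring
      _ ≤ (b - a) * (d - c) * (a * c) :=
        mul_le_mul_of_nonneg_right
          (mul_le_mul (by linarith) (by linarith) (by linarith) (by linarith)) hac
      _ ≤ max (a * c) (f a * g c) * ((b - a) * (d - c)) := by
        rw [mul_comm]
        gcongr
        exact le_max_left _ _
  · calc (f b - f a) * (g d - g c) * (a * c) ≤ 0 :=
          mul_nonpos_of_nonpos_of_nonneg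
            (mul_nonpos_of_nonpos_of_nonneg (sub_nonpos.2 hfab) (sub_pos.2 hgcd).le) hac
      _ ≤ max (a * c) (f a * g c) * ((b - a) * (d - c)) :=
          mul_nonneg (le_max_of_le_left hac) hΔ
  · calc (f b - f a) * (g d - g c) * (a * c) ≤ 0 :=
          mul_nonpos_of_nonpos_of_nonneg
            (mul_nonpos_of_nonneg_of_nonpos (sub_pos.2 hfab).le (sub_nonpos.2 hgcd)) hac
      _ ≤ max (a * c) (f a * g c) * ((b - a) * (d - c)) :=
          mul_nonneg (le_max_of_le_left hac) hΔ
  · have hf' := hf.apply_mul_le_apply_mul ha hab hb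
    have hg' := hg.apply_mul_le_apply_mul hc hcd hd
    have hfa := hf.nonneg ⟨ha.le, hab.trans hb⟩
    calc (f b - f a) * (g d - g c) * (a * c) = ((f b - f a) * a) * ((g d - g c) * c) := by ring
      _ ≤ (f a * (b - a)) * (g c * (d - c)) := by
        apply mul_le_mul <;> nlinarith
      _ = f a * g c * ((b - a) * (d - c)) := by ring
      _ ≤ max (a * c) (f a * g c) * ((b - a) * (d - c)) := by
        gcongr
        exact le_max_right _ _

end IsRMMGenerator
noncomputable def rmmH (f g : ℝ → ℝ) (x y : ℝ) : ℝ :=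
  x * y - f x * g y

section rmmH

variable {f g : ℝ → ℝ} {a b c d : ℝ}

theorem rmmC_eq_max_rmmH (f g : ℝ → ℝ) (x y : ℝ) : rmmC f g x y = max 0 (rmmH f g x y) := rfl

theorem rmmH_comm (f g : ℝ → ℝ) (x y : ℝ) : rmmH f g x y = rmmH g f y x := by
  unfold rmmH; ring

theorem rmmH_rect_eq (f g : ℝ → ℝ) (a b c d : ℝ) :
    rmmH f g b d - rmmH f g a d - rmmH f g b c + rmmH f g a c =
      (b - a) * (d - c) - (f b - f a) * (g d - g c) := by
  unfold rmmH; ring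

theorem pos_of_rmmH_pos (hf : IsRMMGenerator f) (hg : IsRMMGenerator g)
    (ha : a ∈ Icc (0:ℝ) 1) (hc : c ∈ Icc (0:ℝ) 1) (h : 0 < rmmH f g a c) : 0 < a ∧ 0 < c := by
  have hac : 0 < a * c := by
    have := mul_nonneg (hf.nonneg ha) (hg.nonneg hc)
    unfold rmmH at h
    linarith
  exact ⟨pos_of_mul_pos_left hac hc.1, pos_of_mul_pos_right hac ha.1⟩

theorem rmmH_mono_left_of_pos (hf : IsRMMGenerator f) (hg : IsRMMGenerator g)
    (ha : a ∈ Icc (0:ℝ) 1) (hb : b ∈ Icc (0:ℝ) 1) (hc : c ∈ Icc (0:ℝ) 1) (hab : a ≤ b)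
    (h : 0 < rmmH f g a c) : rmmH f g a c ≤ rmmH f g b c := by
  obtain ⟨ha₀, -⟩ := pos_of_rmmH_pos hf hg ha hc h
  have hstar := hf.apply_mul_le_apply_mul ha₀ hab hb.2
  have hfg : f a * g c ≤ a * c := by unfold rmmH at h; linarith
  have key : (f b - f a) * g c * a ≤ (b - a) * c * a :=
    calc (f b - f a) * g c * a = (f b - f a) * a * g c := by ring
      _ ≤ f a * (b - a) * g c := mul_le_mul_of_nonneg_right (by linarith) (hg.nonneg hc)
      _ = (b - a) * (f a * g c) := by ring
      _ ≤ (b - a) * (a * c) := mul_le_mul_of_nonneg_left hfg (sub_nonneg.2 hab)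
      _ = (b - a) * c * a := by ring
  have := le_of_mul_le_mul_right key ha₀
  unfold rmmH
  linarith

theorem rmmH_mono_right_of_pos (hf : IsRMMGenerator f) (hg : IsRMMGenerator g)
    (ha : a ∈ Icc (0:ℝ) 1) (hc : c ∈ Icc (0:ℝ) 1) (hd : d ∈ Icc (0:ℝ) 1) (hcd : c ≤ d)
    (h : 0 < rmmH f g a c) : rmmH f g a c ≤ rmmH f g a d := by
  rw [rmmH_comm] at h ⊢
  rw [rmmH_comm f g a d]
  exact rmmH_mono_left_of_pos hg hf hc hd ha hcd h

theorem rmmH_rect_nonneg (hf : IsRMMGenerator f) (hg : IsRMMGenerator g)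
    (ha : 0 < a) (hab : a ≤ b) (hb : b ≤ 1) (hc : 0 < c) (hcd : c ≤ d) (hd : d ≤ 1)
    (h : 0 ≤ rmmH f g a c) :
    0 ≤ rmmH f g b d - rmmH f g a d - rmmH f g b c + rmmH f g a c := by
  have hmax : max (a * c) (f a * g c) = a * c := max_eq_left (by unfold rmmH at h; linarith)
  have key := hf.increment_mul_le hg ha hab hb hc hcd hd
  rw [hmax, mul_comm (a * c)] at key
  rw [rmmH_rect_eq, sub_nonneg]
  exact le_of_mul_le_mul_right key (mul_pos ha hc)

theorem rmmH_add_le_of_nonpos (hf : IsRMMGenerator f) (hg : IsRMMGenerator g)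
    (ha : a ∈ Icc (0:ℝ) 1) (hb : b ∈ Icc (0:ℝ) 1) (hc : c ∈ Icc (0:ℝ) 1) (hd : d ∈ Icc (0:ℝ) 1)
    (hab : a ≤ b) (hcd : c ≤ d) (had : 0 < rmmH f g a d) (hbc : 0 < rmmH f g b c)
    (hac : rmmH f g a c ≤ 0) :
    rmmH f g a d + rmmH f g b c ≤ rmmH f g b d := by
  obtain ⟨ha₀, -⟩ := pos_of_rmmH_pos hf hg ha hd had
  obtain ⟨-, hc₀⟩ := pos_of_rmmH_pos hf hg hb hc hbc
  rw [← sub_nonneg, sub_add_eq_sub_sub]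
  rcases le_or_gt (a * c) ((b - a) * (d - c)) with hlarge | hsmall
  · -- Writing `f x = x φ x`, `g y = y ψ y`, this is the expansion of the defect in
    -- `φ a - φ b`, `ψ c - ψ d` and `Δu Δv - a c`, cleared of denominators.
    have hbd : 0 < b * d := mul_pos (ha₀.trans_le hab) (hc₀.trans_le hcd)
    have hbd' : 0 ≤ rmmH f g b d :=
      had.le.trans (rmmH_mono_left_of_pos hf hg ha hb hd hab had)
    have hsf := hf.apply_mul_le_apply_mul ha₀ hab hb.2
    have hsg := hg.apply_mul_le_apply_mul hc₀ hcd hd.2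
    have hid : (rmmH f g b d - rmmH f g a d - rmmH f g b c) * (b * d) =
        d * g d * (f a * b - f b * a) + b * f b * (g c * d - g d * c) +
          ((b - a) * (d - c) - a * c) * rmmH f g b d := by
      unfold rmmH; ring
    have hterms : 0 ≤ d * g d * (f a * b - f b * a) + b * f b * (g c * d - g d * c) +
        ((b - a) * (d - c) - a * c) * rmmH f g b d := by
      have := hf.nonneg hb
      have := hg.nonneg hd
      have := hc₀.trans_le hcd
      have := ha₀.trans_le hab
      have : 0 ≤ f a * b - f b * a := by linarith
      have : 0 ≤ g c * d - g d * c := by linarith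
      have : 0 ≤ (b - a) * (d - c) - a * c := by linarith
      positivity
    exact nonneg_of_mul_nonneg_left (hid ▸ hterms) hbd
  · have hmax : max (a * c) (f a * g c) = f a * g c := max_eq_right (by unfold rmmH at hac; linarith)
    have key := hf.increment_mul_le hg ha₀ hab hb.2 hc₀ hcd hd.2
    rw [hmax] at key
    have hprod : 0 ≤ (rmmH f g b d - rmmH f g a d - rmmH f g b c) * (a * c) :=
      calc 0 ≤ rmmH f g a c * ((b - a) * (d - c) - a * c) :=
            mul_nonneg_of_nonpos_of_nonpos hac (by linarith)
        _ = (b - a) * (d - c) * (a * c) - f a * g c * ((b - a) * (d - c))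
              - rmmH f g a c * (a * c) := by unfold rmmH; ring
        _ ≤ (b - a) * (d - c) * (a * c) - (f b - f a) * (g d - g c) * (a * c)
              - rmmH f g a c * (a * c) := by linarith
        _ = (rmmH f g b d - rmmH f g a d - rmmH f g b c) * (a * c) := by unfold rmmH; ring
    exact nonneg_of_mul_nonneg_left hprod (mul_pos ha₀ hc₀)

theorem rmmH_add_le (hf : IsRMMGenerator f) (hg : IsRMMGenerator g)
    (ha : a ∈ Icc (0:ℝ) 1) (hb : b ∈ Icc (0:ℝ) 1) (hc : c ∈ Icc (0:ℝ) 1) (hd : d ∈ Icc (0:ℝ) 1)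
    (hab : a ≤ b) (hcd : c ≤ d) (had : 0 < rmmH f g a d) (hbc : 0 < rmmH f g b c) :
    rmmH f g a d + rmmH f g b c ≤ rmmH f g b d + max 0 (rmmH f g a c) := by
  rcases le_or_gt (rmmH f g a c) 0 with hac | hac
  · rw [max_eq_left hac, add_zero]
    exact rmmH_add_le_of_nonpos hf hg ha hb hc hd hab hcd had hbc hac
  · obtain ⟨ha₀, hc₀⟩ := pos_of_rmmH_pos hf hg ha hc hac
    rw [max_eq_right hac.le]
    linarith [rmmH_rect_nonneg hf hg ha₀ hab hb.2 hc₀ hcd hd.2 hac.le]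

theorem rmmC_rect_nonneg (hf : IsRMMGenerator f) (hg : IsRMMGenerator g)
    (ha : a ∈ Icc (0:ℝ) 1) (hb : b ∈ Icc (0:ℝ) 1) (hc : c ∈ Icc (0:ℝ) 1) (hd : d ∈ Icc (0:ℝ) 1)
    (hab : a ≤ b) (hcd : c ≤ d) :
    0 ≤ rmmC f g b d - rmmC f g a d - rmmC f g b c + rmmC f g a c := by
  simp only [rmmC_eq_max_rmmH]
  exact max_zero_rect_nonneg (rmmH_mono_left_of_pos hf hg ha hb hd hab)
    (rmmH_mono_right_of_pos hf hg hb hc hd hcd) (rmmH_mono_right_of_pos hf hg ha hc hd hcd)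
    (rmmH_mono_left_of_pos hf hg ha hb hc hab) (rmmH_add_le hf hg ha hb hc hd hab hcd)

end rmmH

theorem rmmC_isCopula (f g : ℝ → ℝ)
    (hf : IsRMMGenerator f) (hg : IsRMMGenerator g) :
    (∀ u ∈ Icc (0:ℝ) 1, rmmC f g u 0 = 0) ∧
    (∀ v ∈ Icc (0:ℝ) 1, rmmC f g 0 v = 0) ∧
    (∀ u ∈ Icc (0:ℝ) 1, rmmC f g u 1 = u) ∧
    (∀ v ∈ Icc (0:ℝ) 1, rmmC f g 1 v = v) ∧
    (∀ u₁ u₂ v₁ v₂ : ℝ, u₁ ∈ Icc (0:ℝ) 1 → u₂ ∈ Icc (0:ℝ) 1 →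
      v₁ ∈ Icc (0:ℝ) 1 → v₂ ∈ Icc (0:ℝ) 1 → u₁ ≤ u₂ → v₁ ≤ v₂ →
      0 ≤ rmmC f g u₂ v₂ - rmmC f g u₁ v₂ - rmmC f g u₂ v₁ + rmmC f g u₁ v₁) := by
  refine ⟨fun u _ => ?_, fun v _ => ?_, fun u hu => ?_, fun v hv => ?_,
    fun u₁ u₂ v₁ v₂ hu₁ hu₂ hv₁ hv₂ hu hv => rmmC_rect_nonneg hf hg hu₁ hu₂ hv₁ hv₂ hu hv⟩
  · simp [rmmC, hg.zero]
  · simp [rmmC, hf.zero]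
  · simp [rmmC, hg.one, hu.1]
  · simp [rmmC, hf.one, hv.1]
end

section
/- With U = max{X,Z}, W = min{Y,Z} for independent X, Y, Z, and generators f, g satisfying f(F_X F_Z) = F_X(1−F_Z) and g((1−F_Y)(1−F_Z)) = (1−F_Y)F_Z wherever the arguments are positive, the mixed joint distribution H^σ(x,y) = P(U ≤ x, W > y) equals C^RMM_{f,g}(F_U(x), 1−F_W(y)) = max{0, F_U(x)(1−F_W(y)) − f(F_U(x))·g(1−F_W(y))}. -/
open MeasureTheory ProbabilityTheory Set

/-! The event `{U ≤ x, W > y}` is `{X ≤ x} ∩ {Y > y} ∩ {y < Z ≤ x}`, so by independence its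
probability is `F_X(x) (1 - F_Y(y)) max 0 (F_Z(x) - F_Z(y))`. With `a = F_X F_Z` and
`b = (1 - F_Y)(1 - F_Z)`, the generator identities turn `a b - f(a) g(b)` into exactly
`F_X(x) (1 - F_Y(y)) (F_Z(x) - F_Z(y))`; when `a = 0` or `b = 0` both sides vanish, the right one
because `f, g ≥ 0`. -/

section Distribution

variable {Ω : Type*} [MeasurableSpace Ω] {μ : Measure Ω}

lemma measureReal_preimage_Ioi_eq_one_sub [IsProbabilityMeasure μ] {Y : Ω → ℝ}
    (hY : AEMeasurable Y μ) (y : ℝ) :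
    μ.real (Y ⁻¹' Ioi y) = 1 - μ.real (Y ⁻¹' Iic y) := by
  rw [← compl_Iic, preimage_compl,
    probReal_compl_eq_one_sub₀ (hY.nullMeasurableSet_preimage measurableSet_Iic)]

lemma measureReal_preimage_Ioc_eq_max [IsProbabilityMeasure μ] {Z : Ω → ℝ}
    (hZ : AEMeasurable Z μ) (y x : ℝ) :
    μ.real (Z ⁻¹' Ioc y x) = max 0 (μ.real (Z ⁻¹' Iic x) - μ.real (Z ⁻¹' Iic y)) := by
  have := Measure.isProbabilityMeasure_map hZ
  have hIoc := (cdf (μ.map Z)).measure_Ioc y x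
  rw [measure_cdf] at hIoc
  rw [← map_measureReal_apply_of_aemeasurable hZ measurableSet_Ioc,
    ← map_measureReal_apply_of_aemeasurable hZ measurableSet_Iic,
    ← map_measureReal_apply_of_aemeasurable hZ measurableSet_Iic, ← cdf_eq_real, ← cdf_eq_real,
    measureReal_def, hIoc, ENNReal.toReal_ofReal', max_comm]

lemma measureReal_max_le_and_lt_min {X Y Z : Ω → ℝ}
    (hindep : iIndepFun (m := fun _ : Fin 3 => (inferInstance : MeasurableSpace ℝ))
      ![X, Y, Z] μ) (x y : ℝ) :
    μ.real {ω | max (X ω) (Z ω) ≤ x ∧ y < min (Y ω) (Z ω)} =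
      μ.real (X ⁻¹' Iic x) * μ.real (Y ⁻¹' Ioi y) * μ.real (Z ⁻¹' Ioc y x) := by
  have hevent : {ω | max (X ω) (Z ω) ≤ x ∧ y < min (Y ω) (Z ω)} =
      ⋂ i ∈ Finset.univ, ![X, Y, Z] i ⁻¹' ![Iic x, Ioi y, Ioc y x] i := by
    ext ω
    simp [Fin.forall_fin_succ, and_assoc, and_comm, and_left_comm]
  rw [hevent, measureReal_def, hindep.measure_inter_preimage_eq_mul _
    (fun i _ => by fin_cases i <;> simp [measurableSet_Ioc]), Fin.prod_univ_three]
  simp [measureReal_def, ENNReal.toReal_mul]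

end Distribution

lemma max_zero_mul_sub_mul_eq {p q s t u v : ℝ} (hp : 0 ≤ p) (hq : 0 ≤ q)
    (hs : s ∈ Icc (0 : ℝ) 1) (ht : t ∈ Icc (0 : ℝ) 1) (huv : 0 ≤ u * v)
    (hu : 0 < p * s → u = p * (1 - s)) (hv : 0 < q * (1 - t) → v = q * t) :
    max 0 (p * s * (q * (1 - t)) - u * v) = p * q * max 0 (s - t) := by
  obtain ⟨hs0, hs1⟩ := hs
  obtain ⟨ht0, ht1⟩ := ht
  by_cases hpos : 0 < p * s ∧ 0 < q * (1 - t)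
  · rw [hu hpos.1, hv hpos.2, mul_max_of_nonneg _ _ (mul_nonneg hp hq)]
    ring_nf
  have hzero : p * s = 0 ∨ q * (1 - t) = 0 := by
    rcases not_and_or.1 hpos with h | h
    · exact .inl (le_antisymm (not_lt.1 h) (mul_nonneg hp hs0))
    · exact .inr (le_antisymm (not_lt.1 h) (mul_nonneg hq (sub_nonneg.2 ht1)))
  have hlhs : p * s * (q * (1 - t)) = 0 := by rcases hzero with h | h <;> simp [h]
  have hrhs : p * q * max 0 (s - t) = 0 := by
    rcases hzero with h | h <;> rcases mul_eq_zero.1 h with h' | h'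
    · simp [h']
    · simp [h', ht0]
    · simp [h']
    · simp [show t = 1 by linarith, hs1]
  rw [hlhs, hrhs, zero_sub, max_eq_left (neg_nonpos.2 huv)]

theorem mixed_joint_dist_eq_rmm_general (Ω : Type*) [MeasureSpace Ω]
    (μ : Measure Ω) [IsProbabilityMeasure μ]
    (X Y Z : Ω → ℝ) (hY : Measurable Y) (hZ : Measurable Z)
    (hindep : iIndepFun (m := fun _ : Fin 3 => (inferInstance : MeasurableSpace ℝ))
      ![X, Y, Z] μ)
    (FX FY FZ : ℝ → ℝ)
    (hFX : ∀ x, FX x = (μ {ω | X ω ≤ x}).toReal)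
    (hFY : ∀ y, FY y = (μ {ω | Y ω ≤ y}).toReal)
    (hFZ : ∀ z, FZ z = (μ {ω | Z ω ≤ z}).toReal)
    (f g : ℝ → ℝ)
    (hfmap : ∀ t ∈ Icc (0:ℝ) 1, f t ∈ Icc (0:ℝ) 1)
    (hgmap : ∀ t ∈ Icc (0:ℝ) 1, g t ∈ Icc (0:ℝ) 1)
    (hfeq : ∀ x : ℝ, 0 < FX x * FZ x → f (FX x * FZ x) = FX x * (1 - FZ x))
    (hgeq : ∀ y : ℝ, 0 < (1 - FY y) * (1 - FZ y) →
      g ((1 - FY y) * (1 - FZ y)) = (1 - FY y) * FZ y) :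
    ∀ x y : ℝ,
      (μ {ω | max (X ω) (Z ω) ≤ x ∧ y < min (Y ω) (Z ω)}).toReal =
        max 0 ((FX x * FZ x) * ((1 - FY y) * (1 - FZ y)) -
          f (FX x * FZ x) * g ((1 - FY y) * (1 - FZ y))) := by
  intro x y
  have hcdf {W : Ω → ℝ} {F : ℝ → ℝ} (hF : ∀ t, F t = (μ {ω | W ω ≤ t}).toReal) (t : ℝ) :
      μ.real (W ⁻¹' Iic t) = F t := (hF t).symm
  have hunit (s : Set Ω) : μ.real s ∈ Icc (0 : ℝ) 1 := ⟨measureReal_nonneg, measureReal_le_one⟩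
  have hsurvY : μ.real (Y ⁻¹' Ioi y) = 1 - FY y := by
    rw [measureReal_preimage_Ioi_eq_one_sub hY.aemeasurable, hcdf hFY]
  have hFXx := hcdf hFX x ▸ hunit _
  have hFZx := hcdf hFZ x ▸ hunit _
  have hFZy := hcdf hFZ y ▸ hunit _
  have hsurvY_mem := hsurvY ▸ hunit _
  rw [← measureReal_def, measureReal_max_le_and_lt_min hindep, hsurvY,
    measureReal_preimage_Ioc_eq_max hZ.aemeasurable, hcdf hFX, hcdf hFZ, hcdf hFZ]
  refine (max_zero_mul_sub_mul_eq hFXx.1 hsurvY_mem.1 hFZx hFZy ?_ (hfeq x) (hgeq y)).symm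
  exact mul_nonneg (hfmap _ (unitInterval.mul_mem hFXx hFZx)).1
    (hgmap _ (unitInterval.mul_mem hsurvY_mem (Icc.mem_iff_one_sub_mem.mp hFZy))).1

theorem mixed_joint_dist_eq_rmm (Ω : Type*) [MeasureSpace Ω]
    (μ : Measure Ω) [IsProbabilityMeasure μ]
    (X Y Z : Ω → ℝ) (hX : Measurable X) (hY : Measurable Y) (hZ : Measurable Z)
    (hindep : iIndepFun (m := fun _ : Fin 3 => (inferInstance : MeasurableSpace ℝ))
      ![X, Y, Z] μ)
    (FX FY FZ : ℝ → ℝ)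
    (hFX : ∀ x, FX x = (μ {ω | X ω ≤ x}).toReal)
    (hFY : ∀ y, FY y = (μ {ω | Y ω ≤ y}).toReal)
    (hFZ : ∀ z, FZ z = (μ {ω | Z ω ≤ z}).toReal)
    (f g : ℝ → ℝ)
    (hfmap : ∀ t ∈ Icc (0:ℝ) 1, f t ∈ Icc (0:ℝ) 1)
    (hgmap : ∀ t ∈ Icc (0:ℝ) 1, g t ∈ Icc (0:ℝ) 1)
    (hfeq : ∀ x : ℝ, 0 < FX x * FZ x → f (FX x * FZ x) = FX x * (1 - FZ x))
    (hgeq : ∀ y : ℝ, 0 < (1 - FY y) * (1 - FZ y) →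
      g ((1 - FY y) * (1 - FZ y)) = (1 - FY y) * FZ y) :
    ∀ x y : ℝ,
      (μ {ω | max (X ω) (Z ω) ≤ x ∧ y < min (Y ω) (Z ω)}).toReal =
        max 0 ((FX x * FZ x) * ((1 - FY y) * (1 - FZ y)) -
          f (FX x * FZ x) * g ((1 - FY y) * (1 - FZ y))) :=
  mixed_joint_dist_eq_rmm_general Ω μ X Y Z hY hZ hindep FX FY FZ hFX hFY hFZ f g hfmap hgmap hfeq
    hgeq
end

section
/- In the exponential shock model with fixed exogenous shock at time 1, the RMM copula generated by f(u) = max{1−e^{−λ}−u, 0} and g(w) = max{e^{−μ}−w, 0} (for u,w ∈ (0,1], with f(0)=g(0)=0) satisfies: C^RMM_{f,g}(u,w) = 0 if e^{−μ}u + (1−e^{−λ})w ≤ e^{−μ}(1−e^{−λ}); equals e^{−μ}u + (1−e^{−λ})w − e^{−μ}(1−e^{−λ}) if this quantity is positive and u ≤ 1−e^{−λ}, w ≤ e^{−μ}; and equals uw if u > 1−e^{−λ} or w > e^{−μ}. -/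
/-!
With `a = 1 - e^{-λ}` and `b = e^{-μ}`, on the rectangle `(0, a] × (0, b]` both generators are
affine and `u w - (a - u)(b - w) = b u + a w - a b`, so the copula is the positive part of this
affine function. Off the rectangle, or on the axes, one generator vanishes and the copula is `u w`;
the half-plane `b u + a w ≤ a b` meets that region only on the axes, where `u w = 0`.
-/

open Set Real

def IsHingeGenerator (a : ℝ) (f : ℝ → ℝ) : Prop :=
  f 0 = 0 ∧ ∀ u ∈ Ioc (0 : ℝ) 1, f u = max (a - u) 0

def rmmCopula (f g : ℝ → ℝ) (u w : ℝ) : ℝ :=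
  max 0 (u * w - f u * g w)

namespace IsHingeGenerator

variable {a u : ℝ} {f : ℝ → ℝ}

theorem apply_of_le (hf : IsHingeGenerator a f) (hu0 : 0 < u) (hu1 : u ≤ 1) (hua : u ≤ a) :
    f u = a - u := by
  rw [hf.2 u ⟨hu0, hu1⟩, max_eq_left (sub_nonneg.mpr hua)]

theorem apply_eq_zero (hf : IsHingeGenerator a f) (hu : u ∈ Icc (0 : ℝ) 1)
    (h : u = 0 ∨ a ≤ u) : f u = 0 := by
  rcases hu.1.eq_or_lt with rfl | hu0
  · exact hf.1
  · rcases h with rfl | hau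
    · exact absurd hu0 (lt_irrefl 0)
    · rw [hf.2 u ⟨hu0, hu.2⟩, max_eq_right (sub_nonpos.mpr hau)]

end IsHingeGenerator

section RMM

variable {a b u w : ℝ} {f g : ℝ → ℝ}

theorem rmmCopula_of_mul_eq_zero (hu : 0 ≤ u) (hw : 0 ≤ w) (h : f u * g w = 0) :
    rmmCopula f g u w = u * w := by
  rw [rmmCopula, h, sub_zero, max_eq_right (mul_nonneg hu hw)]

theorem rmmCopula_of_mem_rectangle (hf : IsHingeGenerator a f) (hg : IsHingeGenerator b g)
    (hu0 : 0 < u) (hu1 : u ≤ 1) (hua : u ≤ a) (hw0 : 0 < w) (hw1 : w ≤ 1) (hwb : w ≤ b) :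
    rmmCopula f g u w = max 0 (b * u + a * w - a * b) := by
  rw [rmmCopula, hf.apply_of_le hu0 hu1 hua, hg.apply_of_le hw0 hw1 hwb]
  congr 1
  ring

theorem rmmCopula_eq_zero (hf : IsHingeGenerator a f) (hg : IsHingeGenerator b g)
    (ha : 0 < a) (hb : 0 < b) (hu : u ∈ Icc (0 : ℝ) 1) (hw : w ∈ Icc (0 : ℝ) 1)
    (h : b * u + a * w ≤ a * b) : rmmCopula f g u w = 0 := by
  rcases hu.1.eq_or_lt with rfl | hu0
  · rw [rmmCopula_of_mul_eq_zero le_rfl hw.1 (by rw [hf.1, zero_mul]), zero_mul]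
  rcases hw.1.eq_or_lt with rfl | hw0
  · rw [rmmCopula_of_mul_eq_zero hu.1 le_rfl (by rw [hg.1, mul_zero]), mul_zero]
  have hua : u ≤ a := le_of_mul_le_mul_left (by nlinarith) hb
  have hwb : w ≤ b := le_of_mul_le_mul_left (by nlinarith) ha
  rw [rmmCopula_of_mem_rectangle hf hg hu0 hu.2 hua hw0 hw.2 hwb]
  exact max_eq_left (by linarith)

theorem rmmCopula_eq_affine (hf : IsHingeGenerator a f) (hg : IsHingeGenerator b g)
    (hu : u ∈ Icc (0 : ℝ) 1) (hw : w ∈ Icc (0 : ℝ) 1) (h : a * b < b * u + a * w)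
    (hua : u ≤ a) (hwb : w ≤ b) : rmmCopula f g u w = b * u + a * w - a * b := by
  have hu0 : 0 < u := hu.1.lt_of_ne fun hu0 => by
    subst hu0
    linarith [mul_le_mul_of_nonneg_left hwb (hu.1.trans hua)]
  have hw0 : 0 < w := hw.1.lt_of_ne fun hw0 => by
    subst hw0
    linarith [mul_le_mul_of_nonneg_left hua (hw.1.trans hwb)]
  rw [rmmCopula_of_mem_rectangle hf hg hu0 hu.2 hua hw0 hw.2 hwb]
  exact max_eq_right (by linarith)

theorem rmmCopula_eq_mul (hf : IsHingeGenerator a f) (hg : IsHingeGenerator b g)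
    (hu : u ∈ Icc (0 : ℝ) 1) (hw : w ∈ Icc (0 : ℝ) 1) (h : a < u ∨ b < w) :
    rmmCopula f g u w = u * w := by
  refine rmmCopula_of_mul_eq_zero hu.1 hw.1 ?_
  rcases h with hau | hbw
  · rw [hf.apply_eq_zero hu (Or.inr hau.le), zero_mul]
  · rw [hg.apply_eq_zero hw (Or.inr hbw.le), mul_zero]

end RMM

theorem exponential_shock_rmm_copula_general (lam mu : ℝ) (hlam : 0 < lam)
    (f g : ℝ → ℝ)
    (hf0 : f 0 = 0) (hg0 : g 0 = 0)
    (hf : ∀ u ∈ Ioc (0:ℝ) 1, f u = max (1 - exp (-lam) - u) 0)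
    (hg : ∀ w ∈ Ioc (0:ℝ) 1, g w = max (exp (-mu) - w) 0) :
    ∀ u ∈ Icc (0:ℝ) 1, ∀ w ∈ Icc (0:ℝ) 1,
      (exp (-mu) * u + (1 - exp (-lam)) * w ≤ exp (-mu) * (1 - exp (-lam)) →
        max 0 (u * w - f u * g w) = 0) ∧
      (exp (-mu) * (1 - exp (-lam)) < exp (-mu) * u + (1 - exp (-lam)) * w →
        u ≤ 1 - exp (-lam) → w ≤ exp (-mu) →
        max 0 (u * w - f u * g w) =
          exp (-mu) * u + (1 - exp (-lam)) * w - exp (-mu) * (1 - exp (-lam))) ∧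
      (1 - exp (-lam) < u ∨ exp (-mu) < w →
        max 0 (u * w - f u * g w) = u * w) := by
  have ha : 0 < 1 - exp (-lam) := sub_pos.mpr (exp_lt_one_iff.mpr (neg_lt_zero.mpr hlam))
  have hF : IsHingeGenerator (1 - exp (-lam)) f := ⟨hf0, hf⟩
  have hG : IsHingeGenerator (exp (-mu)) g := ⟨hg0, hg⟩
  intro u hu w hw
  rw [mul_comm (exp (-mu)) (1 - exp (-lam))]
  exact ⟨rmmCopula_eq_zero hF hG ha (exp_pos _) hu hw, rmmCopula_eq_affine hF hG hu hw,
    rmmCopula_eq_mul hF hG hu hw⟩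

theorem exponential_shock_rmm_copula (lam mu : ℝ) (hlam : 0 < lam) (hmu : 0 < mu)
    (f g : ℝ → ℝ)
    (hf0 : f 0 = 0) (hg0 : g 0 = 0)
    (hf : ∀ u ∈ Ioc (0:ℝ) 1, f u = max (1 - exp (-lam) - u) 0)
    (hg : ∀ w ∈ Ioc (0:ℝ) 1, g w = max (exp (-mu) - w) 0) :
    ∀ u ∈ Icc (0:ℝ) 1, ∀ w ∈ Icc (0:ℝ) 1,
      (exp (-mu) * u + (1 - exp (-lam)) * w ≤ exp (-mu) * (1 - exp (-lam)) →
        max 0 (u * w - f u * g w) = 0) ∧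
      (exp (-mu) * (1 - exp (-lam)) < exp (-mu) * u + (1 - exp (-lam)) * w →
        u ≤ 1 - exp (-lam) → w ≤ exp (-mu) →
        max 0 (u * w - f u * g w) =
          exp (-mu) * u + (1 - exp (-lam)) * w - exp (-mu) * (1 - exp (-lam))) ∧
      (1 - exp (-lam) < u ∨ exp (-mu) < w →
        max 0 (u * w - f u * g w) = u * w) :=
  exponential_shock_rmm_copula_general lam mu hlam f g hf0 hg0 hf hg
end

section
/- For generators φ₁,…,φ_n satisfying (P1)–(P3) and distribution functions F₁,…,F_n, F_Z, setting Gᵢ = FᵢF_Z and assuming φᵢ(Gᵢ(x)) = Fᵢ(x) whenever Gᵢ(x) > 0, the joint distribution H(x₁,…,x_n) = F₁(x₁)⋯F_n(x_n)·F_Z(min{x₁,…,x_n}) equals C^M_𝛗(G₁(x₁),…,G_n(x_n)), where C^M_𝛗(u) = (∏ᵢ φᵢ(uᵢ))·minᵢ{uᵢ/φᵢ(uᵢ)} when all φᵢ(uᵢ) > 0 and 0 otherwise. -/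
/-! Where every `Gᵢ(xᵢ)` is positive, the compatibility condition gives `φᵢ(Gᵢ(xᵢ)) = Fᵢ(xᵢ)`,
so the ratios `uᵢ / φᵢ(uᵢ)` in the copula become `F_Z(xᵢ)`, and the monotone `F_Z` commutes
with `min`. Otherwise some `Gᵢ(xᵢ) = Fᵢ(xᵢ) F_Z(xᵢ)` vanishes: the copula is grounded, and
`H` vanishes too because either `Fᵢ(xᵢ) = 0` or `F_Z(min xⱼ) ≤ F_Z(xᵢ) = 0`. -/

open Set

/-- The `n`-variate Marshall copula `C^M_𝛗`. -/
noncomputable def marshallCN {n : ℕ} (φ : Fin (n + 1) → ℝ → ℝ)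
    (u : Fin (n + 1) → ℝ) : ℝ :=
  if ∀ i, 0 < φ i (u i) then
    (∏ i, φ i (u i)) *
      Finset.univ.inf' Finset.univ_nonempty (fun i => u i / φ i (u i))
  else 0

open Finset

lemma marshallCN_eq_zero_of_apply_eq_zero {n : ℕ} (φ : Fin (n + 1) → ℝ → ℝ)
    {u : Fin (n + 1) → ℝ} (hu : ∀ j, 0 ≤ u j) {i : Fin (n + 1)} (hi : u i = 0) :
    marshallCN φ u = 0 := by
  unfold marshallCN
  split_ifs with hφ
  · have hinf : univ.inf' univ_nonempty (fun j => u j / φ j (u j)) = 0 :=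
      le_antisymm ((inf'_le _ (mem_univ i)).trans (by rw [hi, zero_div]))
        (le_inf' _ _ fun j _ => div_nonneg (hu j) (hφ j).le)
    rw [hinf, mul_zero]
  · rfl

lemma Monotone.apply_inf'_eq_zero {ι α β : Type*} [SemilatticeInf α] [PartialOrder β] [Zero β]
    {s : Finset ι} (hs : s.Nonempty) {f : α → β}
    (hf : Monotone f) (hf_nonneg : ∀ x, 0 ≤ f x) {x : ι → α} {i : ι} (hi : i ∈ s)
    (hfx : f (x i) = 0) : f (s.inf' hs x) = 0 :=
  le_antisymm (hfx ▸ hf (inf'_le x hi)) (hf_nonneg _)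

lemma marshallCN_eq_of_forall_pos {n : ℕ} (φ : Fin (n + 1) → ℝ → ℝ)
    (F : Fin (n + 1) → ℝ → ℝ) (FZ : ℝ → ℝ) (G : Fin (n + 1) → ℝ → ℝ)
    (hFZmono : Monotone FZ) (hFZ_nonneg : ∀ x, 0 ≤ FZ x)
    (hG : ∀ i x, G i x = F i x * FZ x)
    (hφG : ∀ i x, 0 < G i x → φ i (G i x) = F i x)
    {x : Fin (n + 1) → ℝ} (hpos : ∀ i, 0 < G i (x i)) :
    marshallCN φ (fun i => G i (x i)) =
      (∏ i, F i (x i)) * FZ (univ.inf' univ_nonempty x) := by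
  have hφF : ∀ i, φ i (G i (x i)) = F i (x i) := fun i => hφG i _ (hpos i)
  have hF_pos : ∀ i, 0 < F i (x i) :=
    fun i => pos_of_mul_pos_left (hG i (x i) ▸ hpos i) (hFZ_nonneg _)
  have hratio : ∀ i, G i (x i) / F i (x i) = FZ (x i) := fun i => by
    rw [hG, mul_div_cancel_left₀ _ (hF_pos i).ne']
  rw [marshallCN, if_pos fun i => hφF i ▸ hF_pos i,
    apply_inf'_eq_inf'_comp _ FZ fun _ _ => hFZmono.map_min]
  simp only [hφF, hratio]
  rfl

theorem multivariate_marshall_sklar_general {n : ℕ} (φ : Fin (n + 1) → ℝ → ℝ)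
    (F : Fin (n + 1) → ℝ → ℝ) (FZ : ℝ → ℝ) (G : Fin (n + 1) → ℝ → ℝ)
    (hFZmono : Monotone FZ)
    (hFmap : ∀ i x, F i x ∈ Icc (0:ℝ) 1) (hFZmap : ∀ x, FZ x ∈ Icc (0:ℝ) 1)
    (hG : ∀ i x, G i x = F i x * FZ x)
    (hφG : ∀ i x, 0 < G i x → φ i (G i x) = F i x) :
    ∀ x : Fin (n + 1) → ℝ,
      (∏ i, F i (x i)) * FZ (Finset.univ.inf' Finset.univ_nonempty x) =
        marshallCN φ (fun i => G i (x i)) := by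
  intro x
  have hFZ_nonneg : ∀ x, 0 ≤ FZ x := fun x => (hFZmap x).1
  have hG_nonneg : ∀ i, 0 ≤ G i (x i) :=
    fun i => hG i (x i) ▸ mul_nonneg (hFmap i _).1 (hFZ_nonneg _)
  by_cases hpos : ∀ i, 0 < G i (x i)
  · exact (marshallCN_eq_of_forall_pos φ F FZ G hFZmono hFZ_nonneg hG hφG hpos).symm
  · obtain ⟨i, hi⟩ := not_forall.mp hpos
    have hGi : G i (x i) = 0 := le_antisymm (not_lt.mp hi) (hG_nonneg i)
    rw [marshallCN_eq_zero_of_apply_eq_zero φ hG_nonneg hGi]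
    rcases mul_eq_zero.mp (hG i (x i) ▸ hGi) with hFi | hFZi
    · rw [prod_eq_zero (mem_univ i) hFi, zero_mul]
    · rw [hFZmono.apply_inf'_eq_zero univ_nonempty hFZ_nonneg (mem_univ i) hFZi, mul_zero]

theorem multivariate_marshall_sklar {n : ℕ} (φ : Fin (n + 1) → ℝ → ℝ)
    (F : Fin (n + 1) → ℝ → ℝ) (FZ : ℝ → ℝ) (G : Fin (n + 1) → ℝ → ℝ)
    (hφmono : ∀ i, MonotoneOn (φ i) (Icc 0 1))
    (hφmap : ∀ i, ∀ u ∈ Icc (0:ℝ) 1, φ i u ∈ Icc (0:ℝ) 1)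
    (hφ0 : ∀ i, φ i 0 = 0) (hφ1 : ∀ i, φ i 1 = 1)
    (hφstar : ∀ i, AntitoneOn (fun u => φ i u / u) (Ioc 0 1))
    (hFmono : ∀ i, Monotone (F i)) (hFZmono : Monotone FZ)
    (hFmap : ∀ i x, F i x ∈ Icc (0:ℝ) 1) (hFZmap : ∀ x, FZ x ∈ Icc (0:ℝ) 1)
    (hG : ∀ i x, G i x = F i x * FZ x)
    (hφG : ∀ i x, 0 < G i x → φ i (G i x) = F i x) :
    ∀ x : Fin (n + 1) → ℝ,
      (∏ i, F i (x i)) * FZ (Finset.univ.inf' Finset.univ_nonempty x) =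
        marshallCN φ (fun i => G i (x i)) :=
  multivariate_marshall_sklar_general φ F FZ G hFZmono hFmap hFZmap hG hφG
end

section
/- For independent random variables X₁, X₂, Z with distribution functions F₁, F₂, F_Z, and U₁ = max{X₁, Z}, U₂ = min{X₂, Z}, the mixed joint distribution H^σ(x₁,x₂) = P(U₁ ≤ x₁, U₂ > x₂) equals F₁(x₁)(1−F₂(x₂))·max{0, F_Z(x₁) − F_Z(x₂)}, and this equals max{0, G₁(x₁)Ĝ₂(x₂) − f₁(G₁(x₁))f₂(Ĝ₂(x₂))} where G₁ = F₁F_Z, Ĝ₂ = (1−F₂)(1−F_Z), f₁(G₁) = F₁(1−F_Z), f₂(Ĝ₂) = (1−F₂)F_Z on their positive ranges. -/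
/-!
On the event `{max (X₁, Z) ≤ x₁, x₂ < min (X₂, Z)}` the three variables decouple into
`X₁ ≤ x₁`, `x₂ < X₂` and `x₂ < Z ≤ x₁`, so by independence `H^σ` is the product of their
probabilities, the last being `max 0 (F_Z(x₁) - F_Z(x₂))`. The second form is pure algebra: when
`G₁(x₁)` and `Ĝ₂(x₂)` are positive, `G₁ Ĝ₂ - f₁(G₁) f₂(Ĝ₂) = F₁ (1 - F₂) (F_Z(x₁) - F_Z(x₂))`, and
otherwise both sides vanish because `f₁, f₂ ≥ 0`.
-/

open MeasureTheory ProbabilityTheory Set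

lemma mul_mul_max_sub_eq_max_mul_sub_mul {a b c e p q : ℝ} (ha : 0 ≤ a) (hb₀ : 0 ≤ b)
    (hb₁ : b ≤ 1) (hc : 0 ≤ c) (he₀ : 0 ≤ e) (he₁ : e ≤ 1) (hp₀ : 0 ≤ p) (hq₀ : 0 ≤ q)
    (hp : 0 < a * b → p = a * (1 - b)) (hq : 0 < c * (1 - e) → q = c * e) :
    a * c * max 0 (b - e) = max 0 (a * b * (c * (1 - e)) - p * q) := by
  rcases (mul_nonneg ha hb₀).eq_or_lt with hab | hab
  · have hzero : a * c * max 0 (b - e) = 0 := by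
      rcases mul_eq_zero.1 hab.symm with rfl | rfl
      · simp
      · simp [he₀]
    rw [hzero, ← hab, zero_mul, zero_sub, max_eq_left (neg_nonpos.2 (mul_nonneg hp₀ hq₀))]
  rcases (mul_nonneg hc (sub_nonneg.2 he₁)).eq_or_lt with hce | hce
  · have hzero : a * c * max 0 (b - e) = 0 := by
      rcases mul_eq_zero.1 hce.symm with rfl | he
      · simp
      · simp [show e = 1 by linarith, hb₁]
    rw [hzero, ← hce, mul_zero, zero_sub, max_eq_left (neg_nonpos.2 (mul_nonneg hp₀ hq₀))]
  rw [hp hab, hq hce, show a * b * (c * (1 - e)) - a * (1 - b) * (c * e) = a * c * (b - e) by ring,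
    mul_max_of_nonneg _ _ (mul_nonneg ha hc), mul_zero]

namespace ProbabilityTheory

variable {Ω : Type*} [MeasurableSpace Ω] {μ : Measure Ω}

lemma iIndepFun.measureReal_inter_preimage_three {β : Type*} [MeasurableSpace β]
    {X Y W : Ω → β} (h : iIndepFun ![X, Y, W] μ) {A B C : Set β} (hA : MeasurableSet A)
    (hB : MeasurableSet B) (hC : MeasurableSet C) :
    μ.real (X ⁻¹' A ∩ Y ⁻¹' B ∩ W ⁻¹' C) =
      μ.real (X ⁻¹' A) * μ.real (Y ⁻¹' B) * μ.real (W ⁻¹' C) := by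
  have hmul := h.measure_inter_preimage_eq_mul Finset.univ (sets := ![A, B, C])
    (fun i _ => by fin_cases i <;> assumption)
  have hinter : ⋂ i, ![X, Y, W] i ⁻¹' ![A, B, C] i = X ⁻¹' A ∩ Y ⁻¹' B ∩ W ⁻¹' C := by
    ext ω
    simp [Fin.forall_fin_succ, and_assoc]
  simp only [Finset.mem_univ, iInter_true, Fin.prod_univ_three, hinter] at hmul
  rw [measureReal_def, hmul, ENNReal.toReal_mul, ENNReal.toReal_mul]
  rfl

lemma measureReal_preimage_Ioi [IsProbabilityMeasure μ] {X : Ω → ℝ} (hX : Measurable X)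
    (x : ℝ) : μ.real (X ⁻¹' Ioi x) = 1 - μ.real (X ⁻¹' Iic x) := by
  rw [← compl_Iic, preimage_compl, probReal_compl_eq_one_sub (hX measurableSet_Iic)]

lemma measureReal_preimage_Ioc [IsFiniteMeasure μ] {X : Ω → ℝ} (hX : Measurable X) (a b : ℝ) :
    μ.real (X ⁻¹' Ioc a b) = max 0 (μ.real (X ⁻¹' Iic b) - μ.real (X ⁻¹' Iic a)) := by
  rcases le_total b a with hba | hab
  · rw [Ioc_eq_empty (not_lt.2 hba), preimage_empty, measureReal_empty, eq_comm, max_eq_left]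
    exact sub_nonpos.2 (measureReal_mono (preimage_mono (Iic_subset_Iic.2 hba)))
  · have hsub : X ⁻¹' Iic a ⊆ X ⁻¹' Iic b := preimage_mono (Iic_subset_Iic.2 hab)
    rw [← Iic_sdiff_Iic, preimage_sdiff, measureReal_sdiff hsub (hX measurableSet_Iic),
      max_eq_right (sub_nonneg.2 (measureReal_mono hsub))]

lemma measureReal_max_le_lt_min [IsProbabilityMeasure μ] {X₁ X₂ Z : Ω → ℝ}
    (hX₂ : Measurable X₂) (hZ : Measurable Z) (hindep : iIndepFun ![X₁, X₂, Z] μ) (x₁ x₂ : ℝ) :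
    μ.real {ω | max (X₁ ω) (Z ω) ≤ x₁ ∧ x₂ < min (X₂ ω) (Z ω)} =
      μ.real (X₁ ⁻¹' Iic x₁) * (1 - μ.real (X₂ ⁻¹' Iic x₂)) *
        max 0 (μ.real (Z ⁻¹' Iic x₁) - μ.real (Z ⁻¹' Iic x₂)) := by
  have hevent : {ω | max (X₁ ω) (Z ω) ≤ x₁ ∧ x₂ < min (X₂ ω) (Z ω)} =
      X₁ ⁻¹' Iic x₁ ∩ X₂ ⁻¹' Ioi x₂ ∩ Z ⁻¹' Ioc x₂ x₁ := by
    ext ω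
    simp only [mem_ofPred_eq, max_le_iff, lt_min_iff, mem_inter_iff, mem_preimage, mem_Iic,
      mem_Ioi, mem_Ioc]
    tauto
  rw [hevent, hindep.measureReal_inter_preimage_three measurableSet_Iic measurableSet_Ioi
    measurableSet_Ioc, measureReal_preimage_Ioi hX₂, measureReal_preimage_Ioc hZ]

end ProbabilityTheory
theorem maxmin_mixed_dist_and_rmm_general (Ω : Type*) [MeasureSpace Ω]
    (μ : Measure Ω) [IsProbabilityMeasure μ]
    (X₁ X₂ Z : Ω → ℝ) (hX₂ : Measurable X₂)
    (hZ : Measurable Z)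
    (hindep : iIndepFun ![X₁, X₂, Z] μ)
    (F₁ F₂ FZ : ℝ → ℝ)
    (hF₁ : ∀ x, F₁ x = (μ {ω | X₁ ω ≤ x}).toReal)
    (hF₂ : ∀ x, F₂ x = (μ {ω | X₂ ω ≤ x}).toReal)
    (hFZ : ∀ z, FZ z = (μ {ω | Z ω ≤ z}).toReal)
    (f₁ f₂ : ℝ → ℝ)
    (hf₁map : ∀ t ∈ Icc (0:ℝ) 1, f₁ t ∈ Icc (0:ℝ) 1)
    (hf₂map : ∀ t ∈ Icc (0:ℝ) 1, f₂ t ∈ Icc (0:ℝ) 1)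
    (hf₁ : ∀ x : ℝ, 0 < F₁ x * FZ x → f₁ (F₁ x * FZ x) = F₁ x * (1 - FZ x))
    (hf₂ : ∀ x : ℝ, 0 < (1 - F₂ x) * (1 - FZ x) →
      f₂ ((1 - F₂ x) * (1 - FZ x)) = (1 - F₂ x) * FZ x) :
    ∀ x₁ x₂ : ℝ,
      (μ {ω | max (X₁ ω) (Z ω) ≤ x₁ ∧ x₂ < min (X₂ ω) (Z ω)}).toReal =
        F₁ x₁ * (1 - F₂ x₂) * max 0 (FZ x₁ - FZ x₂) ∧
      (μ {ω | max (X₁ ω) (Z ω) ≤ x₁ ∧ x₂ < min (X₂ ω) (Z ω)}).toReal =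
        max 0 ((F₁ x₁ * FZ x₁) * ((1 - F₂ x₂) * (1 - FZ x₂)) -
          f₁ (F₁ x₁ * FZ x₁) * f₂ ((1 - F₂ x₂) * (1 - FZ x₂))) := by
  intro x₁ x₂
  have hcdf_mem : ∀ (X : Ω → ℝ) x, (μ {ω | X ω ≤ x}).toReal ∈ Icc (0 : ℝ) 1 :=
    fun X x => ⟨measureReal_nonneg, measureReal_le_one⟩
  have hF₁_mem := hF₁ x₁ ▸ hcdf_mem X₁ x₁
  have hF₂_mem := hF₂ x₂ ▸ hcdf_mem X₂ x₂
  have hFZ₁_mem := hFZ x₁ ▸ hcdf_mem Z x₁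
  have hFZ₂_mem := hFZ x₂ ▸ hcdf_mem Z x₂
  have hG₁_mem : F₁ x₁ * FZ x₁ ∈ Icc (0 : ℝ) 1 :=
    ⟨mul_nonneg hF₁_mem.1 hFZ₁_mem.1, mul_le_one₀ hF₁_mem.2 hFZ₁_mem.1 hFZ₁_mem.2⟩
  have hĜ₂_mem : (1 - F₂ x₂) * (1 - FZ x₂) ∈ Icc (0 : ℝ) 1 := by
    constructor <;> nlinarith [hF₂_mem.1, hF₂_mem.2, hFZ₂_mem.1, hFZ₂_mem.2]
  have hmixed : (μ {ω | max (X₁ ω) (Z ω) ≤ x₁ ∧ x₂ < min (X₂ ω) (Z ω)}).toReal =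
      F₁ x₁ * (1 - F₂ x₂) * max 0 (FZ x₁ - FZ x₂) := by
    rw [hF₁, hF₂, hFZ, hFZ]
    exact measureReal_max_le_lt_min hX₂ hZ hindep x₁ x₂
  refine ⟨hmixed, hmixed.trans ?_⟩
  exact mul_mul_max_sub_eq_max_mul_sub_mul hF₁_mem.1 hFZ₁_mem.1 hFZ₁_mem.2
    (sub_nonneg.2 hF₂_mem.2) hFZ₂_mem.1 hFZ₂_mem.2 (hf₁map _ hG₁_mem).1 (hf₂map _ hĜ₂_mem).1
    (hf₁ x₁) (hf₂ x₂)

theorem maxmin_mixed_dist_and_rmm (Ω : Type*) [MeasureSpace Ω]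
    (μ : Measure Ω) [IsProbabilityMeasure μ]
    (X₁ X₂ Z : Ω → ℝ) (hX₁ : Measurable X₁) (hX₂ : Measurable X₂)
    (hZ : Measurable Z)
    (hindep : iIndepFun ![X₁, X₂, Z] μ)
    (F₁ F₂ FZ : ℝ → ℝ)
    (hF₁ : ∀ x, F₁ x = (μ {ω | X₁ ω ≤ x}).toReal)
    (hF₂ : ∀ x, F₂ x = (μ {ω | X₂ ω ≤ x}).toReal)
    (hFZ : ∀ z, FZ z = (μ {ω | Z ω ≤ z}).toReal)
    (f₁ f₂ : ℝ → ℝ)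
    (hf₁map : ∀ t ∈ Icc (0:ℝ) 1, f₁ t ∈ Icc (0:ℝ) 1)
    (hf₂map : ∀ t ∈ Icc (0:ℝ) 1, f₂ t ∈ Icc (0:ℝ) 1)
    (hf₁ : ∀ x : ℝ, 0 < F₁ x * FZ x → f₁ (F₁ x * FZ x) = F₁ x * (1 - FZ x))
    (hf₂ : ∀ x : ℝ, 0 < (1 - F₂ x) * (1 - FZ x) →
      f₂ ((1 - F₂ x) * (1 - FZ x)) = (1 - F₂ x) * FZ x) :
    ∀ x₁ x₂ : ℝ,
      (μ {ω | max (X₁ ω) (Z ω) ≤ x₁ ∧ x₂ < min (X₂ ω) (Z ω)}).toReal =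
        F₁ x₁ * (1 - F₂ x₂) * max 0 (FZ x₁ - FZ x₂) ∧
      (μ {ω | max (X₁ ω) (Z ω) ≤ x₁ ∧ x₂ < min (X₂ ω) (Z ω)}).toReal =
        max 0 ((F₁ x₁ * FZ x₁) * ((1 - F₂ x₂) * (1 - FZ x₂)) -
          f₁ (F₁ x₁ * FZ x₁) * f₂ ((1 - F₂ x₂) * (1 - FZ x₂))) :=
  maxmin_mixed_dist_and_rmm_general Ω μ X₁ X₂ Z hX₂ hZ hindep F₁ F₂ FZ hF₁ hF₂ hFZ f₁ f₂ hf₁map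
    hf₂map hf₁ hf₂
end
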